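/- arXiv:1605.05825 — 2 statements merged into one kernel-verified Lean document; each statement's English description precedes it below -/
import Mathlib

section
/- Let $a, z, x_0 \in \mathbb{R}$ with $a > 0$ (playing the role of $e^{\int_0^T r_s ds}$), let $P_0, N_0 > 0$ with $P_0 a^{-2} \le 1$ and $N_0 a^{-2} < 1$, and suppose $z > x_0 a$. Define $V(\eta) = P_0 \big((x_0 - \eta a^{-1})^+\big)^2 + N_0 \big((x_0 - \eta a^{-1})^-\big)^2 - (\eta - z)^2$. Then $\sup_{\eta \in \mathbb{R}} V(\eta) = \dfrac{N_0 a^{-2}}{1 - N_0 a^{-2}} (z - x_0 a)^2$, and the supremum is attained at $\eta^* = \dfrac{z - N_0 a^{-2} x_0 a}{1 - N_0 a^{-2}} > x_0 a$. -/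
/-!
With `u = η - x₀ a`, `d = z - x₀ a`, `p = P₀ / a²` and `c = N₀ / a²`, the dual function becomes
`p (u⁻)² + c (u⁺)² - (u - d)²`. For `u ≥ 0` this is the concave quadratic `c u² - (u - d)²`;
completing the square shows its maximum is `c d² / (1 - c)`, attained at `u = d / (1 - c) ≥ 0`.
For `u ≤ 0`, `p ≤ 1` and `d ≥ 0` keep the function below its value `-d²` at `u = 0`.
-/

lemma mul_sq_sub_sq_le_of_lt_one (c u d : ℝ) (hc : c < 1) :
    c * u ^ 2 - (u - d) ^ 2 ≤ c / (1 - c) * d ^ 2 := by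
  have h1c : 0 < 1 - c := sub_pos.2 hc
  have hsq : c / (1 - c) * d ^ 2 - (c * u ^ 2 - (u - d) ^ 2) = ((1 - c) * u - d) ^ 2 / (1 - c) := by
    field_simp; ring
  have : 0 ≤ ((1 - c) * u - d) ^ 2 / (1 - c) := by positivity
  linarith

lemma mul_sq_sub_sq_of_lt_one (c d : ℝ) (hc : c < 1) :
    c * (d / (1 - c)) ^ 2 - (d / (1 - c) - d) ^ 2 = c / (1 - c) * d ^ 2 := by
  have : 1 - c ≠ 0 := (sub_pos.2 hc).ne'
  field_simp; ring

lemma mul_sq_sub_sq_le_neg_sq_of_nonpos (p u d : ℝ) (hp : p ≤ 1) (hu : u ≤ 0) (hd : 0 ≤ d) :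
    p * u ^ 2 - (u - d) ^ 2 ≤ -d ^ 2 := by
  nlinarith [mul_nonneg (sub_nonneg.2 hp) (sq_nonneg u), mul_nonpos_of_nonpos_of_nonneg hu hd]

lemma piecewise_quadratic_le (p c d u : ℝ) (hp : p ≤ 1) (hc : c < 1) (hd : 0 ≤ d) :
    p * max (-u) 0 ^ 2 + c * max u 0 ^ 2 - (u - d) ^ 2 ≤ c / (1 - c) * d ^ 2 := by
  rcases le_total u 0 with hu | hu
  · rw [max_eq_left (neg_nonneg.2 hu), max_eq_right hu, neg_sq]
    linarith [mul_sq_sub_sq_le_neg_sq_of_nonpos p u d hp hu hd,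
      mul_sq_sub_sq_le_of_lt_one c 0 d hc]
  · rw [max_eq_right (neg_nonpos.2 hu), max_eq_left hu]
    simpa using mul_sq_sub_sq_le_of_lt_one c u d hc

lemma piecewise_quadratic_at_opt (p c d : ℝ) (hc : c < 1) (hd : 0 ≤ d) :
    p * max (-(d / (1 - c))) 0 ^ 2 + c * max (d / (1 - c)) 0 ^ 2 - (d / (1 - c) - d) ^ 2
      = c / (1 - c) * d ^ 2 := by
  have hopt : 0 ≤ d / (1 - c) := div_nonneg hd (sub_pos.2 hc).le
  rw [max_eq_right (neg_nonpos.2 hopt), max_eq_left hopt]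
  simpa using mul_sq_sub_sq_of_lt_one c d hc

lemma mul_max_div_sq (k x a : ℝ) (ha : 0 < a) :
    k * max (x / a) 0 ^ 2 = k / a ^ 2 * max x 0 ^ 2 := by
  have h := max_div_div_right ha.le x 0
  rw [zero_div] at h
  rw [h, div_pow, mul_div_assoc', div_mul_eq_mul_div]

theorem mv_dual_sup_general
    (a z x0 P0 N0 : ℝ) (ha : 0 < a)
    (hP0a : P0 / a ^ 2 ≤ 1) (hN0a : N0 / a ^ 2 < 1) (hz : x0 * a < z)
    (V : ℝ → ℝ)
    (hV : ∀ η, V η = P0 * (max (x0 - η / a) 0) ^ 2 + N0 * (max (-(x0 - η / a)) 0) ^ 2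
      - (η - z) ^ 2) :
    IsGreatest (Set.range V) ((N0 / a ^ 2) / (1 - N0 / a ^ 2) * (z - x0 * a) ^ 2) ∧
      V ((z - (N0 / a ^ 2) * x0 * a) / (1 - N0 / a ^ 2)) =
        (N0 / a ^ 2) / (1 - N0 / a ^ 2) * (z - x0 * a) ^ 2 ∧
      x0 * a < (z - (N0 / a ^ 2) * x0 * a) / (1 - N0 / a ^ 2) := by
  have hd : 0 ≤ z - x0 * a := (sub_pos.2 hz).le
  have hVu : ∀ η, V η = P0 / a ^ 2 * max (-(η - x0 * a)) 0 ^ 2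
      + N0 / a ^ 2 * max (η - x0 * a) 0 ^ 2 - ((η - x0 * a) - (z - x0 * a)) ^ 2 := fun η => by
    have hx : x0 - η / a = -(η - x0 * a) / a := by field_simp; ring
    rw [hV, hx, neg_div, neg_neg, ← neg_div, mul_max_div_sq _ _ _ ha, mul_max_div_sq _ _ _ ha,
      sub_sub_sub_cancel_right]
  have hopt : (z - N0 / a ^ 2 * x0 * a) / (1 - N0 / a ^ 2)
      = x0 * a + (z - x0 * a) / (1 - N0 / a ^ 2) := by
    rw [add_div' _ _ _ (sub_pos.2 hN0a).ne']
    ring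
  have hVopt : V ((z - N0 / a ^ 2 * x0 * a) / (1 - N0 / a ^ 2))
      = N0 / a ^ 2 / (1 - N0 / a ^ 2) * (z - x0 * a) ^ 2 := by
    rw [hVu, hopt, add_sub_cancel_left]
    exact piecewise_quadratic_at_opt _ _ _ hN0a hd
  refine ⟨⟨⟨_, hVopt⟩, ?_⟩, hVopt, ?_⟩
  · rintro _ ⟨η, rfl⟩
    rw [hVu]
    exact piecewise_quadratic_le _ _ _ _ hP0a hN0a hd
  · rw [hopt]
    linarith [div_pos (sub_pos.2 hz) (sub_pos.2 hN0a)]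

/-- Lagrange dual maximization for the mean-variance efficient frontier:
`sup_η V(η) = (N₀ a⁻²)/(1 - N₀ a⁻²) (z - x₀ a)²`, attained at
`η* = (z - N₀ a⁻² x₀ a)/(1 - N₀ a⁻²) > x₀ a`. -/
theorem mv_dual_sup
    (a z x0 P0 N0 : ℝ) (ha : 0 < a) (hP0 : 0 < P0) (hN0 : 0 < N0)
    (hP0a : P0 / a ^ 2 ≤ 1) (hN0a : N0 / a ^ 2 < 1) (hz : x0 * a < z)
    (V : ℝ → ℝ)
    (hV : ∀ η, V η = P0 * (max (x0 - η / a) 0) ^ 2 + N0 * (max (-(x0 - η / a)) 0) ^ 2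
      - (η - z) ^ 2) :
    IsGreatest (Set.range V) ((N0 / a ^ 2) / (1 - N0 / a ^ 2) * (z - x0 * a) ^ 2) ∧
      V ((z - (N0 / a ^ 2) * x0 * a) / (1 - N0 / a ^ 2)) =
        (N0 / a ^ 2) / (1 - N0 / a ^ 2) * (z - x0 * a) ^ 2 ∧
      x0 * a < (z - (N0 / a ^ 2) * x0 * a) / (1 - N0 / a ^ 2) :=
  mv_dual_sup_general a z x0 P0 N0 ha hP0a hN0a hz V hV
end

section
/- Let $(Y^0, Y^1)$ solve the recursive system $Y^1_t(\theta) = h(\theta) + f(0)(T-t)$ for $\theta \wedge T \le t \le T$ and $Y^0_t = c + \int_t^T f(Y^1_s(s) - Y^0_s) ds$ for $0 \le t \le T$, with $f$ Lipschitz and $h$ bounded measurable. Define $Y_t = Y^0_t 1_{\{t < \tau\}} + Y^1_t(\tau) 1_{\{t \ge \tau\}}$ and $U_t = (Y^1_t(t) - Y^0_t) 1_{\{t \le \tau\}}$ for a fixed value $\tau \in (0,T]$. Then $Y$ is a càdlàg function on $[0,T]$ satisfying, pathwise, $Y_t = Y_0 - \int_0^t f(U_s)\, ds + \sum_{0 <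 s \le t} U_s \Delta L_s$ where $L_s = 1_{\{\tau \le s\}}$, and $Y_T = c\,1_{\{T < \tau\}} + h(\tau)\,1_{\{\tau \le T\}}$. -/
/-!
Before `τ` the process is `Y⁰`, and its backward equation turns into the forward one by splitting
`∫_t^T = ∫_0^T - ∫_0^t`; this needs the driver to be integrable, which holds because its argument
is the bounded `h` plus a function continuous on `[0,T]`. From `τ` on the process is the affine
function `h(τ) + f(0)(T - t)`, whose slope is the driver `f(U) = f(0)` there, and the jump at `τ`
is `Y¹_τ(τ) - Y⁰_τ = U_τ`. Being pasted from two continuous functions, `Y` is càdlàg.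
-/

open Set Filter intervalIntegral MeasureTheory Topology

theorem Continuous.intervalIntegrable_comp_of_abs_le {f g : ℝ → ℝ} {a b C : ℝ}
    (hf : Continuous f) (hg : Measurable g) (hgC : ∀ s ∈ uIcc a b, |g s| ≤ C) :
    IntervalIntegrable (fun s => f (g s)) volume a b := by
  obtain ⟨M, hM⟩ := isCompact_Icc.exists_bound_of_continuousOn (hf.continuousOn (s := Icc (-C) C))
  rw [intervalIntegrable_iff]
  refine Measure.integrableOn_of_bounded (M := M) measure_Ioc_lt_top.ne
    (hf.measurable.comp hg).aestronglyMeasurable ?_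
  refine ae_restrict_of_forall_mem measurableSet_uIoc fun s hs => hM _ ?_
  exact abs_le.mp (hgC s (uIoc_subset_uIcc hs))

theorem eq_sub_integral_of_eq_add_integral {F g : ℝ → ℝ} {a b c : ℝ}
    (hg : IntervalIntegrable g volume a b)
    (hF : ∀ t ∈ Icc a b, F t = c + ∫ s in t..b, g s) :
    ∀ t ∈ Icc a b, F t = F a - ∫ s in a..t, g s := by
  intro t ht
  have hsplit := integral_add_adjacent_intervals
    (hg.mono_set (uIcc_subset_uIcc left_mem_uIcc (mem_uIcc_of_le ht.1 ht.2)))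
    (hg.mono_set (uIcc_subset_uIcc (mem_uIcc_of_le ht.1 ht.2) right_mem_uIcc))
  rw [hF t ht, hF a (left_mem_Icc.mpr (ht.1.trans ht.2)), ← hsplit]
  ring

theorem integral_ite_le_const {φ : ℝ → ℝ} {a τ b c : ℝ} (haτ : a ≤ τ) (hτb : τ ≤ b)
    (hφ : IntervalIntegrable φ volume a τ) :
    ∫ s in a..b, (if s ≤ τ then φ s else c) = (∫ s in a..τ, φ s) + (b - τ) * c := by
  have hleft : EqOn (fun s => if s ≤ τ then φ s else c) φ (uIcc a τ) := fun s hs => by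
    rw [uIcc_of_le haτ] at hs
    exact if_pos hs.2
  have hright : EqOn (fun s => if s ≤ τ then φ s else c) (fun _ => c) (uIoc τ b) := fun s hs => by
    rw [uIoc_of_le hτb] at hs
    exact if_neg (not_le.mpr hs.1)
  rw [← integral_add_adjacent_intervals (hφ.congr (hleft.symm.mono uIoc_subset_uIcc))
      ((intervalIntegrable_const (c := c)).congr hright.symm),
    integral_congr hleft, integral_congr_ae (ae_of_all _ hright),
    intervalIntegral.integral_const, smul_eq_mul]

section
variable {β α : Type*} [LinearOrder β] [TopologicalSpace β] [OrderTopology β] [TopologicalSpace α]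
  {F G : β → α} {τ t : β}

theorem continuousWithinAt_Ici_ite_lt (hF : Continuous F) (hG : Continuous G) :
    ContinuousWithinAt (fun s => if s < τ then F s else G s) (Ici t) t := by
  rcases lt_or_ge t τ with htτ | hτt
  · refine (hF.continuousAt.congr ?_).continuousWithinAt
    filter_upwards [Iio_mem_nhds htτ] with s hs
    exact (if_pos hs).symm
  · exact hG.continuousWithinAt.congr (fun s hs => if_neg (not_lt.mpr (hτt.trans hs)))
      (if_neg (not_lt.mpr hτt))

theorem exists_tendsto_nhdsLT_ite_lt (hF : Continuous F) (hG : Continuous G) :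
    ∃ l, Tendsto (fun s => if s < τ then F s else G s) (𝓝[<] t) (𝓝 l) := by
  rcases le_or_gt t τ with htτ | hτt
  · refine ⟨F t, (hF.tendsto t).mono_left nhdsWithin_le_nhds |>.congr' ?_⟩
    filter_upwards [self_mem_nhdsWithin] with s hs
    exact (if_pos (lt_of_lt_of_le hs htτ)).symm
  · refine ⟨G t, (hG.tendsto t).mono_left nhdsWithin_le_nhds |>.congr' ?_⟩
    filter_upwards [mem_nhdsWithin_of_mem_nhds (Ioi_mem_nhds hτt)] with s hs
    exact (if_neg (not_lt.mpr hs.le)).symm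
end

/-- Pathwise verification that pasting the before-default solution `Y⁰` and the
after-default solution `Y¹_t(θ) = h(θ) + f(0)(T-t)` at a fixed time `τ ∈ (0,T]` yields a
càdlàg solution of `-dY_t = f(U_t) dt - U_t dL_t` with terminal value
`c 1_{T<τ} + h(τ) 1_{τ≤T}`, where `U_t = (Y¹_t(t) - Y⁰_t) 1_{t≤τ}`. -/
theorem pasted_solution_single_jump
    (T τ c : ℝ) (hτ0 : 0 < τ) (hτT : τ ≤ T)
    (f : ℝ → ℝ) (K : NNReal) (hf : LipschitzWith K f)
    (h : ℝ → ℝ) (hmeas : Measurable h) (Ch : ℝ) (hbdd : ∀ θ, |h θ| ≤ Ch)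
    (Y1 : ℝ → ℝ → ℝ) (hY1 : ∀ t θ, Y1 t θ = h θ + f 0 * (T - t))
    (Y0 : ℝ → ℝ) (hY0cont : Continuous Y0)
    (hY0 : ∀ t ∈ Icc 0 T, Y0 t = c + ∫ s in t..T, f (Y1 s s - Y0 s))
    (Y U : ℝ → ℝ)
    (hY : ∀ t, Y t = if t < τ then Y0 t else Y1 t τ)
    (hU : ∀ t, U t = if t ≤ τ then Y1 t t - Y0 t else 0) :
    (∀ t ∈ Icc 0 T, ContinuousWithinAt Y (Ici t) t ∧
      ∃ l : ℝ, Tendsto Y (nhdsWithin t (Iio t)) (nhds l)) ∧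
    (∀ t ∈ Icc 0 T,
      Y t = Y 0 - (∫ s in (0 : ℝ)..t, f (U s)) + (if τ ≤ t then U τ else 0)) ∧
    Y T = (if T < τ then c else h τ) := by
  obtain rfl : Y1 = fun t θ => h θ + f 0 * (T - t) := funext₂ hY1
  obtain rfl : Y = fun t => if t < τ then Y0 t else h τ + f 0 * (T - t) := funext hY
  obtain rfl : U = fun t => if t ≤ τ then h t + (f 0 * (T - t) - Y0 t) else 0 := by
    funext t; rw [hU, add_sub_assoc]
  simp only [add_sub_assoc] at hY0
  have hGint : IntervalIntegrable (fun s => f (h s + (f 0 * (T - s) - Y0 s))) volume 0 T := by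
    obtain ⟨M, hM⟩ := isCompact_uIcc.exists_bound_of_continuousOn
      (f := fun s => f 0 * (T - s) - Y0 s) (by fun_prop)
    refine hf.continuous.intervalIntegrable_comp_of_abs_le (C := Ch + M) (by fun_prop)
      fun s hs => (abs_add_le _ _).trans (add_le_add (hbdd s) (hM s hs))
  have hY0int := eq_sub_integral_of_eq_add_integral hGint hY0
  refine ⟨fun t _ => ⟨continuousWithinAt_Ici_ite_lt hY0cont (by fun_prop),
    exists_tendsto_nhdsLT_ite_lt hY0cont (by fun_prop)⟩, fun t ht => ?_, ?_⟩
  · simp only [apply_ite f, if_pos hτ0, if_pos le_rfl]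
    rcases lt_or_ge t τ with htτ | hτt
    · rw [if_pos htτ, if_neg (not_le.mpr htτ), add_zero, hY0int t ht]
      refine congrArg _ (integral_congr fun s hs => (if_pos ?_).symm)
      exact (uIcc_of_le ht.1 ▸ hs).2.trans htτ.le
    · have hτ : τ ∈ Icc 0 T := ⟨hτ0.le, hτT⟩
      rw [if_neg (not_lt.mpr hτt), if_pos hτt,
        integral_ite_le_const hτ0.le hτt
        (hGint.mono_set (uIcc_subset_uIcc left_mem_uIcc (mem_uIcc_of_le hτ0.le hτT)))]
      linear_combination hY0int τ hτ
  · simp [not_lt.mpr hτT]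
end
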